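/- Let γ : [0,1] → ℂ be an injective continuously differentiable curve with nowhere vanishing derivative, let z₀ = γ(0) be its initial endpoint, and let g be holomorphic on an open set U containing the image of γ. Then there exist an open neighborhood V ⊆ U of z₀, a holomorphic function Ĩ on V, and a holomorphic function L on V \ γ([0,1]) satisfying exp(L(t)) = t − z₀ for all t ∈ V \ γ([0,1]) (a branch of log(t − z₀)), such that for every t ∈ V \ γ([0,1]): (1/(2πi)) ∫₀¹ g(γ(s)) γ'(s)/(γ(s) − t) ds = Ĩ(t) − (1/(2πi)) g(t) L(t). -/

import Mathlib

/-!
Split the Cauchy kernel at `t` as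
`g (γ s) / (γ s - t) = dslope g (γ s) t + g t / (γ s - t)`.
Since `dslope g` is jointly continuous and holomorphic in each variable, the first part
integrates to a function `Φ` holomorphic on all of `U`. The second part is `g t * J t` with
`J t = ∫ γ' / (γ - t)`, and `exp (J t) = (γ 1 - t) / (γ 0 - t)` because `J` is the integral of
the logarithmic derivative of `γ - t`. Since `γ 1 ≠ γ 0`, the factor `γ 1 - t` has a holomorphic
logarithm `Lg` near `γ 0`, so `L := Lg + π i - J` is a branch of
`log (t - γ 0)` off the curve and `I = (Φ + g J) / (2 π i) = Ĩ - g L / (2 π i)` with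
`Ĩ := (Φ + g (Lg + π i)) / (2 π i)`.
-/

open MeasureTheory Set

/-- The Cauchy type integral `I(γ,g,t)` of `g` along the curve `γ` (with derivative `γ'`). -/
noncomputable def cauchyTypeIntegral (γ γ' : ℝ → ℂ) (g : ℂ → ℂ) (t : ℂ) : ℂ :=
  (1 / (2 * Real.pi * Complex.I)) * ∫ s in (0:ℝ)..1, g (γ s) * γ' s / (γ s - t)

open Metric Filter Topology Interval Complex

theorem aestronglyMeasurable_deriv_of_eventually {𝕜 α E : Type*} [NontriviallyNormedField 𝕜]
    [NormedAddCommGroup E] [NormedSpace 𝕜 E] [MeasurableSpace α] {μ : Measure α}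
    {F : 𝕜 → α → E} {x₀ : 𝕜} (hF : ∀ᶠ x in 𝓝 x₀, AEStronglyMeasurable (F x) μ)
    (hd : ∀ᵐ a ∂μ, DifferentiableAt 𝕜 (F · a) x₀) :
    AEStronglyMeasurable (fun a => deriv (F · a) x₀) μ := by
  obtain ⟨u, hu⟩ := (𝓝[≠] x₀).exists_seq_tendsto
  obtain ⟨N, hN⟩ := eventually_atTop.1 (hu.eventually (hF.filter_mono nhdsWithin_le_nhds))
  refine aestronglyMeasurable_of_tendsto_ae atTop
    (f := fun n a => slope (F · a) x₀ (u (n + N))) (fun n => ?_) ?_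
  · simp only [slope_def_module]
    exact ((hN (n + N) (Nat.le_add_left N n)).sub hF.self_of_nhds).const_smul _
  · filter_upwards [hd] with a ha
    exact (hasDerivAt_iff_tendsto_slope.1 ha.hasDerivAt).comp (hu.comp (tendsto_add_atTop_nat N))

theorem differentiableOn_intervalIntegral_of_continuousOn {E : Type*} [NormedAddCommGroup E]
    [NormedSpace ℂ E] [CompleteSpace E] {F : ℂ → ℝ → E} {V : Set ℂ} {a b : ℝ} (hab : a ≤ b)
    (hV : IsOpen V) (hF : ContinuousOn (Function.uncurry F) (V ×ˢ Icc a b))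
    (hFd : ∀ s ∈ Icc a b, DifferentiableOn ℂ (F · s) V) :
    DifferentiableOn ℂ (fun t => ∫ s in a..b, F t s) V := by
  intro t₀ ht₀
  obtain ⟨r, hr, hball⟩ : ∃ r > 0, closedBall t₀ (2 * r) ⊆ V := by
    obtain ⟨ε, hε, hεV⟩ := nhds_basis_closedBall.mem_iff.1 (hV.mem_nhds ht₀)
    exact ⟨ε / 2, half_pos hε, by rwa [mul_div_cancel₀ _ two_ne_zero]⟩
  obtain ⟨M, hM⟩ := ((isCompact_closedBall t₀ (2 * r)).prod
    isCompact_Icc).exists_bound_of_continuousOn (hF.mono (prod_mono hball subset_rfl))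
  have hIoc : Ι a b ⊆ Icc a b := by rw [uIoc_of_le hab]; exact Ioc_subset_Icc_self
  have hslice : ∀ t ∈ V, ContinuousOn (F t) (Icc a b) := fun t ht =>
    hF.comp (continuousOn_const.prodMk continuousOn_id) fun s hs => ⟨ht, hs⟩
  have hmeas : ∀ t ∈ V, AEStronglyMeasurable (F t) (volume.restrict (Ι a b)) := fun t ht =>
    ((hslice t ht).aestronglyMeasurable measurableSet_Icc).mono_set hIoc
  have hdiff : ∀ s ∈ Icc a b, ∀ t ∈ ball t₀ (2 * r), HasDerivAt (F · s) (deriv (F · s) t) t :=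
    fun s hs t ht => ((hFd s hs).differentiableAt
      (hV.mem_nhds (hball (ball_subset_closedBall ht)))).hasDerivAt
  -- Cauchy's estimate on circles of radius `r`, which stay inside `closedBall t₀ (2 * r)`.
  have hbound : ∀ s ∈ Icc a b, ∀ t ∈ ball t₀ r, ‖deriv (F · s) t‖ ≤ M / r := by
    intro s hs t ht
    have hsub : closedBall t r ⊆ closedBall t₀ (2 * r) := closedBall_subset_closedBall' (by
      rw [mem_ball] at ht; linarith)
    refine Complex.norm_deriv_le_of_forall_mem_sphere_norm_le hr ?_ fun w hw =>
      hM (w, s) ⟨hsub (sphere_subset_closedBall hw), hs⟩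
    exact ((hFd s hs).mono (hsub.trans hball)).diffContOnCl_ball subset_rfl
  have key := intervalIntegral.hasDerivAt_integral_of_dominated_loc_of_deriv_le
    (ball_mem_nhds t₀ hr) (eventually_of_mem (hV.mem_nhds ht₀) hmeas)
    ((hslice t₀ ht₀).intervalIntegrable_of_Icc hab)
    (aestronglyMeasurable_deriv_of_eventually (eventually_of_mem (hV.mem_nhds ht₀) hmeas)
      (ae_restrict_of_forall_mem measurableSet_uIoc fun s hs =>
        (hdiff s (hIoc hs) t₀ (mem_ball_self (by positivity))).differentiableAt))
    (ae_of_all _ fun s hs t ht => hbound s (hIoc hs) t ht) intervalIntegrable_const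
    (ae_of_all _ fun s hs t ht => hdiff s (hIoc hs) t (ball_subset_ball (by linarith) ht))
  exact key.2.differentiableAt.differentiableWithinAt

theorem norm_dslope_sub_deriv_le {E : Type*} [NormedAddCommGroup E] [NormedSpace ℂ E]
    {g : ℂ → E} {s : Set ℂ} (hs : Convex ℝ s) (hg : ∀ w ∈ s, DifferentiableAt ℂ g w) {c : ℂ}
    {ε : ℝ} (hε : ∀ w ∈ s, ‖deriv g w - deriv g c‖ ≤ ε) {z w : ℂ} (hz : z ∈ s) (hw : w ∈ s) :
    ‖dslope g z w - deriv g c‖ ≤ ε := by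
  rcases eq_or_ne w z with rfl | hwz
  · rw [dslope_same]; exact hε w hw
  have hmv : ‖g w - g z - (w - z) • deriv g c‖ ≤ ε * ‖w - z‖ := by
    have := hs.norm_image_sub_le_of_norm_hasDerivWithin_le (f := fun x => g x - x • deriv g c)
      (fun x hx =>
        ((hg x hx).hasDerivAt.sub ((hasDerivAt_id x).smul_const (deriv g c))).hasDerivWithinAt)
      (fun x hx => by simpa using hε x hx) hz hw
    rwa [sub_sub_sub_comm, ← sub_smul] at this
  have hwz' : w - z ≠ 0 := sub_ne_zero.2 hwz
  calc ‖dslope g z w - deriv g c‖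
      = ‖w - z‖⁻¹ * ‖g w - g z - (w - z) • deriv g c‖ := by
        rw [dslope_of_ne _ hwz, slope_def_module, ← norm_inv, ← norm_smul,
          smul_sub (w - z)⁻¹ (g w - g z), smul_smul, inv_mul_cancel₀ hwz', one_smul]
    _ ≤ ‖w - z‖⁻¹ * (ε * ‖w - z‖) := by gcongr
    _ = ε := by field_simp

theorem continuousOn_dslope_uncurry {E : Type*} [NormedAddCommGroup E] [NormedSpace ℂ E]
    [CompleteSpace E] {g : ℂ → E} {U : Set ℂ} (hU : IsOpen U) (hg : DifferentiableOn ℂ g U) :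
    ContinuousOn (fun p : ℂ × ℂ => dslope g p.1 p.2) (U ×ˢ U) := by
  rintro ⟨c, t⟩ ⟨hc, ht⟩
  dsimp only at hc ht
  refine ContinuousAt.continuousWithinAt ?_
  rcases eq_or_ne c t with rfl | hct
  · refine Metric.tendsto_nhds.2 fun ε hε => ?_
    have hg' : ContinuousAt (deriv g) c := (hg.deriv hU).continuousOn.continuousAt (hU.mem_nhds hc)
    obtain ⟨ρ, hρ, hρU⟩ := Metric.eventually_nhds_iff_ball.1
      ((hU.eventually_mem hc).and (Metric.tendsto_nhds.1 hg' (ε / 2) (half_pos hε)))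
    filter_upwards [prod_mem_nhds (ball_mem_nhds c hρ) (ball_mem_nhds c hρ)] with ⟨z, w⟩ ⟨hz, hw⟩
    rw [dslope_same, dist_eq_norm]
    refine lt_of_le_of_lt (norm_dslope_sub_deriv_le (convex_ball c ρ)
      (fun x hx => hg.differentiableAt (hU.mem_nhds (hρU x hx).1)) (fun x hx => ?_) hz hw)
      (half_lt_self hε)
    rw [← dist_eq_norm]; exact (hρU x hx).2.le
  · have hslope : (fun p : ℂ × ℂ => (p.2 - p.1)⁻¹ • (g p.2 - g p.1)) =ᶠ[𝓝 (c, t)]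
        fun p => dslope g p.1 p.2 := by
      filter_upwards [(isOpen_ne_fun continuous_fst continuous_snd).mem_nhds hct] with p hp
      rw [dslope_of_ne _ (Ne.symm hp), slope_def_module]
    refine ContinuousAt.congr ?_ hslope
    exact ((continuousAt_snd.sub continuousAt_fst).inv₀ (sub_ne_zero.2 hct.symm)).smul
      (((hg.continuousOn.continuousAt (hU.mem_nhds ht)).comp continuousAt_snd).sub
        ((hg.continuousOn.continuousAt (hU.mem_nhds hc)).comp continuousAt_fst))

theorem exp_integral_deriv_div_mul_eq {f f' : ℝ → ℂ} {a b : ℝ} (hab : a ≤ b)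
    (hf : ∀ x ∈ Icc a b, HasDerivWithinAt f (f' x) (Icc a b) x)
    (hf' : ContinuousOn f' (Icc a b)) (hf0 : ∀ x ∈ Icc a b, f x ≠ 0) :
    exp (∫ x in a..b, f' x / f x) * f a = f b := by
  have hcont : ContinuousOn (fun x => f' x / f x) (Icc a b) :=
    hf'.div (fun x hx => (hf x hx).continuousWithinAt) hf0
  -- Extending `f' / f` continuously to `ℝ` gives a primitive `P` differentiable everywhere.
  set h : ℝ → ℂ := fun x => f' (projIcc a b hab x) / f (projIcc a b hab x)
  have hh : ∀ x ∈ Icc a b, h x = f' x / f x := fun x hx => by simp [h, projIcc_of_mem hab hx]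
  have hh_cont : Continuous h := hcont.comp_continuous
    (continuous_subtype_val.comp continuous_projIcc) fun y => (projIcc a b hab y).2
  set P : ℝ → ℂ := fun x => ∫ y in a..x, h y
  have hP : ∀ x, HasDerivAt P (h x) x := fun x =>
    (hh_cont.integral_hasStrictDerivAt a x).hasDerivAt
  have hPb : P b = ∫ x in a..b, f' x / f x :=
    intervalIntegral.integral_congr fun x hx => hh x (by rwa [uIcc_of_le hab] at hx)
  have hderiv : ∀ x ∈ Icc a b, HasDerivWithinAt (fun x => exp (-P x) * f x) 0 (Icc a b) x := by
    intro x hx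
    refine ((hP x).neg.cexp.hasDerivWithinAt.mul (hf x hx)).congr_deriv ?_
    rw [hh x hx]
    field_simp [hf0 x hx]
    ring
  have hconst := norm_image_sub_le_of_norm_deriv_le_segment' hderiv (fun _ _ => norm_zero.le) b
    ⟨hab, le_rfl⟩
  rw [zero_mul, norm_le_zero_iff, sub_eq_zero] at hconst
  simp only [P, intervalIntegral.integral_same, neg_zero, exp_zero, one_mul] at hconst
  rw [← hPb, ← hconst, ← mul_assoc, ← exp_add, add_neg_cancel, exp_zero, one_mul]

theorem exists_differentiableOn_exp_eq_sub (a b : ℂ) :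
    ∃ L : ℂ → ℂ, DifferentiableOn ℂ L (ball b ‖a - b‖) ∧
      ∀ t ∈ ball b ‖a - b‖, exp (L t) = a - t := by
  have hslit : ∀ t ∈ ball b ‖a - b‖, (a - t) / (a - b) ∈ slitPlane := by
    intro t ht
    have hab : a - b ≠ 0 := fun h => by simp [h] at ht
    have hsplit : (a - t) / (a - b) = 1 + (b - t) / (a - b) := by
      field_simp
      ring
    rw [hsplit]
    refine mem_slitPlane_of_norm_lt_one ?_
    rwa [norm_div, div_lt_one (norm_pos_iff.2 hab), ← dist_eq_norm, dist_comm, ← mem_ball]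
  refine ⟨fun t => log (a - b) + log ((a - t) / (a - b)), fun t ht => ?_, fun t ht => ?_⟩
  · have hquot : DifferentiableAt ℂ (fun t => (a - t) / (a - b)) t := by fun_prop
    exact ((hquot.clog (hslit t ht)).const_add _).differentiableWithinAt
  · have hab : a - b ≠ 0 := fun h => by simp [h] at ht
    rw [exp_add, exp_log hab, exp_log (slitPlane_ne_zero (hslit t ht))]
    field_simp

section CurveIntegrals

variable {γ γ' : ℝ → ℂ} {a b : ℝ}

theorem continuousOn_dslope_comp_mul {g : ℂ → ℂ} {U : Set ℂ} (hU : IsOpen U)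
    (hg : DifferentiableOn ℂ g U) (hγ : ContinuousOn γ (Icc a b))
    (hγ' : ContinuousOn γ' (Icc a b)) (hγU : MapsTo γ (Icc a b) U) :
    ContinuousOn (fun p : ℂ × ℝ => dslope g (γ p.2) p.1 * γ' p.2) (U ×ˢ Icc a b) :=
  ((continuousOn_dslope_uncurry hU hg).comp
      ((hγ.comp continuousOn_snd fun _ hp => hp.2).prodMk continuousOn_fst)
      fun _ hp => ⟨hγU hp.2, hp.1⟩).mul
    (hγ'.comp continuousOn_snd fun _ hp => hp.2)

theorem differentiableOn_intervalIntegral_dslope_comp_mul {g : ℂ → ℂ} {U : Set ℂ} (hab : a ≤ b)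
    (hU : IsOpen U) (hg : DifferentiableOn ℂ g U) (hγ : ContinuousOn γ (Icc a b))
    (hγ' : ContinuousOn γ' (Icc a b)) (hγU : MapsTo γ (Icc a b) U) :
    DifferentiableOn ℂ (fun t => ∫ s in a..b, dslope g (γ s) t * γ' s) U :=
  differentiableOn_intervalIntegral_of_continuousOn hab hU
    (continuousOn_dslope_comp_mul hU hg hγ hγ' hγU) fun _ hs =>
      ((Complex.differentiableOn_dslope (hU.mem_nhds (hγU hs))).2 hg).mul_const _

theorem differentiableOn_intervalIntegral_div_sub (hab : a ≤ b) (hγ : ContinuousOn γ (Icc a b))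
    (hγ' : ContinuousOn γ' (Icc a b)) :
    DifferentiableOn ℂ (fun t => ∫ s in a..b, γ' s / (γ s - t)) (γ '' Icc a b)ᶜ := by
  have hne : ∀ t ∉ γ '' Icc a b, ∀ s ∈ Icc a b, γ s - t ≠ 0 := fun t ht s hs h =>
    ht ⟨s, hs, sub_eq_zero.1 h⟩
  refine differentiableOn_intervalIntegral_of_continuousOn hab
    (isCompact_Icc.image_of_continuousOn hγ).isClosed.isOpen_compl ?_ fun s hs t ht => ?_
  · exact (hγ'.comp continuousOn_snd fun _ hp => hp.2).div
      ((hγ.comp continuousOn_snd fun _ hp => hp.2).sub continuousOn_fst)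
      fun p hp => hne p.1 hp.1 p.2 hp.2
  · exact ((differentiableAt_const _).div ((differentiableAt_const _).sub differentiableAt_id)
      (hne t ht s hs)).differentiableWithinAt

theorem intervalIntegral_mul_div_sub_eq {g : ℂ → ℂ} {U : Set ℂ} (hab : a ≤ b) (hU : IsOpen U)
    (hg : DifferentiableOn ℂ g U) (hγ : ContinuousOn γ (Icc a b))
    (hγ' : ContinuousOn γ' (Icc a b)) (hγU : MapsTo γ (Icc a b) U) {t : ℂ} (htU : t ∈ U)
    (ht : t ∉ γ '' Icc a b) :
    ∫ s in a..b, g (γ s) * γ' s / (γ s - t) =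
      (∫ s in a..b, dslope g (γ s) t * γ' s) + g t * ∫ s in a..b, γ' s / (γ s - t) := by
  have hne : ∀ s ∈ Icc a b, γ s - t ≠ 0 := fun s hs h => ht ⟨s, hs, sub_eq_zero.1 h⟩
  have hsplit : EqOn (fun s => g (γ s) * γ' s / (γ s - t))
      (fun s => dslope g (γ s) t * γ' s + g t * (γ' s / (γ s - t))) [[a, b]] := by
    intro s hs
    rw [uIcc_of_le hab] at hs
    have hts : t ≠ γ s := fun h => hne s hs (by rw [h, sub_self])
    dsimp only
    rw [dslope_of_ne _ hts, slope_def_field]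
    field_simp [hne s hs, sub_ne_zero.2 hts]
    ring
  have hdslope : IntervalIntegrable (fun s => dslope g (γ s) t * γ' s) volume a b :=
    ((continuousOn_dslope_comp_mul hU hg hγ hγ' hγU).comp
      (continuousOn_const.prodMk continuousOn_id) fun _ hs => ⟨htU, hs⟩).intervalIntegrable_of_Icc
      hab
  have hkernel : IntervalIntegrable (fun s => g t * (γ' s / (γ s - t))) volume a b :=
    ((hγ'.div (hγ.sub continuousOn_const) hne).const_smul (g t)).intervalIntegrable_of_Icc hab
  rw [intervalIntegral.integral_congr hsplit, intervalIntegral.integral_add hdslope hkernel,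
    intervalIntegral.integral_const_mul]

end CurveIntegrals

theorem stmt6_general (γ γ' : ℝ → ℂ)
    (hderiv : ∀ s ∈ Set.Icc (0:ℝ) 1, HasDerivWithinAt γ (γ' s) (Set.Icc 0 1) s)
    (hcont : ContinuousOn γ' (Set.Icc 0 1))
    (hinj : Set.InjOn γ (Set.Icc 0 1))
    (U : Set ℂ) (hUopen : IsOpen U) (himage : γ '' Set.Icc 0 1 ⊆ U)
    (g : ℂ → ℂ) (hg : DifferentiableOn ℂ g U) :
    ∃ V : Set ℂ, IsOpen V ∧ γ 0 ∈ V ∧ V ⊆ U ∧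
      ∃ Itil L : ℂ → ℂ, DifferentiableOn ℂ Itil V ∧
        DifferentiableOn ℂ L (V \ γ '' Set.Icc 0 1) ∧
        (∀ t ∈ V \ γ '' Set.Icc 0 1, Complex.exp (L t) = t - γ 0) ∧
        (∀ t ∈ V \ γ '' Set.Icc 0 1,
          cauchyTypeIntegral γ γ' g t =
            Itil t - (1 / (2 * Real.pi * Complex.I)) * g t * L t) := by
  have hγ : ContinuousOn γ (Icc 0 1) := fun s hs => (hderiv s hs).continuousWithinAt
  have hγU : MapsTo γ (Icc 0 1) U := mapsTo_iff_image_subset.2 himage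
  set Φ := fun t => ∫ s in (0:ℝ)..1, dslope g (γ s) t * γ' s
  set J := fun t => ∫ s in (0:ℝ)..1, γ' s / (γ s - t)
  have hΦ : DifferentiableOn ℂ Φ U :=
    differentiableOn_intervalIntegral_dslope_comp_mul zero_le_one hUopen hg hγ hcont hγU
  have hJ : DifferentiableOn ℂ J (γ '' Icc 0 1)ᶜ :=
    differentiableOn_intervalIntegral_div_sub zero_le_one hγ hcont
  have hexpJ : ∀ t ∉ γ '' Icc 0 1, exp (J t) * (γ 0 - t) = γ 1 - t := fun t ht =>
    exp_integral_deriv_div_mul_eq zero_le_one (fun s hs => (hderiv s hs).sub_const t) hcont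
      fun s hs h => ht ⟨s, hs, sub_eq_zero.1 h⟩
  obtain ⟨Lg, hLg, hexpLg⟩ := exists_differentiableOn_exp_eq_sub (γ 1) (γ 0)
  have hγ01 : γ 1 ≠ γ 0 := fun h => one_ne_zero (hinj ⟨zero_le_one, le_rfl⟩ ⟨le_rfl, zero_le_one⟩ h)
  refine ⟨U ∩ ball (γ 0) ‖γ 1 - γ 0‖, hUopen.inter isOpen_ball,
    ⟨himage ⟨0, ⟨le_rfl, zero_le_one⟩, rfl⟩, mem_ball_self (norm_pos_iff.2 (sub_ne_zero.2 hγ01))⟩,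
    inter_subset_left, fun t => (1 / (2 * Real.pi * I)) * (Φ t + g t * (Lg t + Real.pi * I)),
    fun t => Lg t + Real.pi * I - J t, ?_, ?_, fun t ht => ?_, fun t ht => ?_⟩
  · exact ((hΦ.mono inter_subset_left).add ((hg.mono inter_subset_left).mul
      ((hLg.mono inter_subset_right).add_const _))).const_mul _
  · exact ((hLg.mono fun t ht => ht.1.2).add_const _).sub (hJ.mono fun t ht => ht.2)
  · rw [exp_sub, exp_add, exp_pi_mul_I, hexpLg t ht.1.2, div_eq_iff (exp_ne_zero _)]
    linear_combination hexpJ t ht.2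
  · rw [cauchyTypeIntegral,
      intervalIntegral_mul_div_sub_eq zero_le_one hUopen hg hγ hcont hγU ht.1.1 ht.2]
    ring

theorem stmt6 (γ γ' : ℝ → ℂ)
    (hderiv : ∀ s ∈ Set.Icc (0:ℝ) 1, HasDerivWithinAt γ (γ' s) (Set.Icc 0 1) s)
    (hcont : ContinuousOn γ' (Set.Icc 0 1))
    (hne : ∀ s ∈ Set.Icc (0:ℝ) 1, γ' s ≠ 0)
    (hinj : Set.InjOn γ (Set.Icc 0 1))
    (U : Set ℂ) (hUopen : IsOpen U) (himage : γ '' Set.Icc 0 1 ⊆ U)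
    (g : ℂ → ℂ) (hg : DifferentiableOn ℂ g U) :
    ∃ V : Set ℂ, IsOpen V ∧ γ 0 ∈ V ∧ V ⊆ U ∧
      ∃ Itil L : ℂ → ℂ, DifferentiableOn ℂ Itil V ∧
        DifferentiableOn ℂ L (V \ γ '' Set.Icc 0 1) ∧
        (∀ t ∈ V \ γ '' Set.Icc 0 1, Complex.exp (L t) = t - γ 0) ∧
        (∀ t ∈ V \ γ '' Set.Icc 0 1,
          cauchyTypeIntegral γ γ' g t =
            Itil t - (1 / (2 * Real.pi * Complex.I)) * g t * L t) :=
  stmt6_general γ γ' hderiv hcont hinj U hUopen himage g hg
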